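/- arXiv:2407.15112 — 5 statements merged into one kernel-verified Lean document; each statement's English description precedes it below -/
import Mathlib

section
/- Let X be a Banach space in which, for every bounded linear operator T with ‖T‖ < 1, the function A_T(x) = (‖x‖² − ‖Tx‖²)^{1/2} defines a norm. Then for all x, y ∈ X with x Birkhoff-James orthogonal to y (i.e., ‖x + λy‖ ≥ ‖x‖ for all scalars λ), the Pythagorean identities ‖x+y‖² = ‖x‖² + ‖y‖² = ‖x−y‖² hold. -/
/-- `f` defines a norm on the complex vector space `X`. -/
def IsNorm {X : Type*} [NormedAddCommGroup X] [NormedSpace ℂ X] (f : X → ℝ) : Prop :=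
  (∀ x, 0 ≤ f x) ∧ (∀ x, f x = 0 ↔ x = 0) ∧
    (∀ (c : ℂ) (x : X), f (c • x) = ‖c‖ * f x) ∧ (∀ x y, f (x + y) ≤ f x + f y)

/-!
For a functional `g` with `‖g‖ ≤ 1` and a unit vector `e`, the operators `T = r • g(·) e` with
`r < 1` are strict contractions, and as `r → 1` the norms `A_T` converge to
`q(z) = √(‖z‖² - |g z|²)`, which is therefore a seminorm. Taking `g` norming for `x + y` gives
`q(x + y) = 0`, hence `q(x + l y) = q((l - 1) y) = |l - 1| q(y)`, i.e.
`‖x + l y‖² = |g x + l g y|² + |l - 1|² q(y)²`. Minimality of this quadratic function of `l` at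
`l = 0` forces `conj (g x) * g y = q(y)²`, from which both identities follow by expanding.
-/

open ComplexConjugate

section Defect

variable {X : Type*} [NormedAddCommGroup X] [NormedSpace ℂ X]

noncomputable def normSqDefect (g : StrongDual ℂ X) (z : X) : ℝ := ‖z‖ ^ 2 - ‖g z‖ ^ 2

lemma normSqDefect_smul (g : StrongDual ℂ X) (c : ℂ) (z : X) :
    normSqDefect g (c • z) = ‖c‖ ^ 2 * normSqDefect g z := by
  simp only [normSqDefect, map_smul, smul_eq_mul, norm_smul, norm_mul]
  ring

lemma normSqDefect_neg (g : StrongDual ℂ X) (z : X) : normSqDefect g (-z) = normSqDefect g z := by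
  simp only [normSqDefect, map_neg, norm_neg]

lemma normSqDefect_nonneg {g : StrongDual ℂ X} (hg : ‖g‖ ≤ 1) (z : X) : 0 ≤ normSqDefect g z := by
  have : ‖g z‖ ≤ ‖z‖ := g.le_of_opNorm_le hg z |>.trans_eq (one_mul _)
  unfold normSqDefect
  nlinarith [norm_nonneg (g z)]

lemma exists_opNorm_lt_one_norm_apply_eq (g : StrongDual ℂ X) (hg : ‖g‖ ≤ 1) {r : ℝ}
    (hr₀ : 0 ≤ r) (hr : r < 1) : ∃ T : X →L[ℂ] X, ‖T‖ < 1 ∧ ∀ z, ‖T z‖ = r * ‖g z‖ := by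
  rcases subsingleton_or_nontrivial X with hX | hX
  · exact ⟨0, by simp, fun z => by simp [Subsingleton.elim z 0]⟩
  obtain ⟨e, he⟩ := exists_norm_eq X zero_le_one
  refine ⟨(r : ℂ) • g.smulRight e, ?_, fun z => ?_⟩
  · calc ‖(r : ℂ) • g.smulRight e‖ = r * ‖g‖ := by
          rw [norm_smul, ContinuousLinearMap.norm_smulRight_apply, he, Complex.norm_real,
            Real.norm_of_nonneg hr₀, mul_one]
      _ < 1 := by nlinarith [norm_nonneg g]
  · simp [norm_smul, he, Real.norm_of_nonneg hr₀]

lemma sqrt_normSqDefect_add_le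
    (h : ∀ T : X →L[ℂ] X, ‖T‖ < 1 → IsNorm (fun x => Real.sqrt (‖x‖ ^ 2 - ‖T x‖ ^ 2)))
    {g : StrongDual ℂ X} (hg : ‖g‖ ≤ 1) (u v : X) :
    √(normSqDefect g (u + v)) ≤ √(normSqDefect g u) + √(normSqDefect g v) := by
  set A : ℝ → X → ℝ := fun r z => √(‖z‖ ^ 2 - (r * ‖g z‖) ^ 2)
  have hA : ∀ z, Continuous (A · z) := fun z => by fun_prop
  have hA_tri : ∀ r ∈ Set.Ico (0 : ℝ) 1, A r (u + v) ≤ A r u + A r v := by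
    rintro r ⟨hr₀, hr⟩
    obtain ⟨T, hT, hTg⟩ := exists_opNorm_lt_one_norm_apply_eq g hg hr₀ hr
    simpa only [A, hTg] using (h T hT).2.2.2 u v
  have hA_one := (isClosed_le (hA _) ((hA u).add (hA v))).closure_subset_iff.2 hA_tri
    (by rw [closure_Ico zero_ne_one]; exact ⟨zero_le_one, le_rfl⟩)
  simpa only [A, one_mul, Set.mem_ofPred_eq, Pi.add_apply, normSqDefect] using hA_one

lemma normSqDefect_add_of_eq_zero
    (h : ∀ T : X →L[ℂ] X, ‖T‖ < 1 → IsNorm (fun x => Real.sqrt (‖x‖ ^ 2 - ‖T x‖ ^ 2)))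
    {g : StrongDual ℂ X} (hg : ‖g‖ ≤ 1) {p : X} (hp : normSqDefect g p = 0) (w : X) :
    normSqDefect g (p + w) = normSqDefect g w := by
  have h₁ := sqrt_normSqDefect_add_le h hg p w
  have h₂ := sqrt_normSqDefect_add_le h hg (p + w) (-p)
  rw [add_neg_cancel_comm, normSqDefect_neg, hp, Real.sqrt_zero] at h₂
  rw [hp, Real.sqrt_zero, zero_add] at h₁
  rw [← Real.sqrt_inj (normSqDefect_nonneg hg _) (normSqDefect_nonneg hg _)]
  linarith

lemma norm_add_smul_sq_eq
    (h : ∀ T : X →L[ℂ] X, ‖T‖ < 1 → IsNorm (fun x => Real.sqrt (‖x‖ ^ 2 - ‖T x‖ ^ 2)))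
    {g : StrongDual ℂ X} (hg : ‖g‖ ≤ 1) {x y : X} (hxy : normSqDefect g (x + y) = 0) (l : ℂ) :
    ‖x + l • y‖ ^ 2 = ‖g x + l * g y‖ ^ 2 + ‖l - 1‖ ^ 2 * normSqDefect g y := by
  have := normSqDefect_add_of_eq_zero h hg hxy ((l - 1) • y)
  rw [normSqDefect_smul, show x + y + (l - 1) • y = x + l • y by module] at this
  rw [← this, normSqDefect, map_add, map_smul, smul_eq_mul]
  ring

end Defect

lemma eq_zero_of_forall_re_mul_add_nonneg {c : ℂ} {K : ℝ}
    (h : ∀ l : ℂ, 0 ≤ 2 * (c * l).re + K * ‖l‖ ^ 2) : c = 0 := by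
  have hdisc := discrim_le_zero (a := K * ‖c‖ ^ 2) (b := 2 * ‖c‖ ^ 2) (c := 0) fun t => by
    have := h (t * conj c)
    rw [norm_mul, Complex.norm_real, Real.norm_eq_abs, Complex.norm_conj, mul_pow, sq_abs,
      mul_left_comm, Complex.mul_conj', ← Complex.ofReal_pow, ← Complex.ofReal_mul,
      Complex.ofReal_re] at this
    linarith
  rw [discrim] at hdisc
  have : ‖c‖ ^ 2 = 0 := by nlinarith [sq_nonneg (‖c‖ ^ 2)]
  simpa using this

lemma conj_mul_eq_of_forall_le {a b : ℂ} {d : ℝ}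
    (h : ∀ l : ℂ, ‖a‖ ^ 2 + d ≤ ‖a + l * b‖ ^ 2 + ‖l - 1‖ ^ 2 * d) : conj a * b = d := by
  rw [← sub_eq_zero]
  refine eq_zero_of_forall_re_mul_add_nonneg (K := ‖b‖ ^ 2 + d) fun l => ?_
  have := h l
  simp only [Complex.sq_norm, Complex.normSq_apply, Complex.mul_re, Complex.mul_im, Complex.add_re,
    Complex.add_im, Complex.sub_re, Complex.sub_im, Complex.conj_re, Complex.conj_im,
    Complex.ofReal_re, Complex.ofReal_im, Complex.one_re, Complex.one_im] at this ⊢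
  nlinarith

theorem stmt_5_general {X : Type*} [NormedAddCommGroup X] [NormedSpace ℂ X]
    (h : ∀ T : X →L[ℂ] X, ‖T‖ < 1 →
      IsNorm (fun x => Real.sqrt (‖x‖ ^ 2 - ‖T x‖ ^ 2))) :
    ∀ x y : X, (∀ l : ℂ, ‖x‖ ≤ ‖x + l • y‖) →
      ‖x + y‖ ^ 2 = ‖x‖ ^ 2 + ‖y‖ ^ 2 ∧ ‖x - y‖ ^ 2 = ‖x‖ ^ 2 + ‖y‖ ^ 2 := by
  intro x y hxy
  obtain ⟨g, hg, hgxy⟩ := exists_dual_vector'' ℂ (x + y)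
  have hD : normSqDefect g (x + y) = 0 := by simp [normSqDefect, hgxy]
  have hsplit := norm_add_smul_sq_eq h hg hD
  have hx : ‖x‖ ^ 2 = ‖g x‖ ^ 2 + normSqDefect g y := by simpa using hsplit 0
  have hconj : conj (g x) * g y = normSqDefect g y := conj_mul_eq_of_forall_le fun l => by
    rw [← hsplit l, ← hx]
    exact pow_le_pow_left₀ (norm_nonneg x) (hxy l) 2
  have hy : ‖y‖ ^ 2 = ‖g y‖ ^ 2 + normSqDefect g y := by rw [normSqDefect]; ring
  have hsum := hsplit 1
  have hdiff := hsplit (-1)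
  rw [one_smul, one_mul, sub_self, norm_zero] at hsum
  rw [neg_smul, one_smul, ← sub_eq_add_neg, neg_one_mul, ← sub_eq_add_neg,
    show (-1 - 1 : ℂ) = -2 by norm_num, norm_neg, Complex.norm_two] at hdiff
  rw [hsum, hdiff, hx, hy]
  have hre := congrArg Complex.re hconj
  simp only [Complex.mul_re, Complex.conj_re, Complex.conj_im, Complex.ofReal_re] at hre
  simp only [Complex.sq_norm, Complex.normSq_apply, Complex.add_re, Complex.add_im,
    Complex.sub_re, Complex.sub_im]
  constructor <;> linarith

/-- If `A_T` defines a norm on `X` for every strict contraction `T`, then Birkhoff-James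
orthogonality implies the Pythagorean identities `‖x+y‖² = ‖x‖² + ‖y‖² = ‖x−y‖²`. -/
theorem stmt_5 {X : Type*} [NormedAddCommGroup X] [NormedSpace ℂ X] [CompleteSpace X]
    (h : ∀ T : X →L[ℂ] X, ‖T‖ < 1 →
      IsNorm (fun x => Real.sqrt (‖x‖ ^ 2 - ‖T x‖ ^ 2))) :
    ∀ x y : X, (∀ l : ℂ, ‖x‖ ≤ ‖x + l • y‖) →
      ‖x + y‖ ^ 2 = ‖x‖ ^ 2 + ‖y‖ ^ 2 ∧ ‖x - y‖ ^ 2 = ‖x‖ ^ 2 + ‖y‖ ^ 2 :=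
  stmt_5_general h
end

section
/- Let X be a Banach space and Y a closed proper subspace. Then Y is the kernel of a norm-one projection on X if and only if there exists a closed subspace Ỹ such that Ỹ is a vector space complement of Y in X and Ỹ is Birkhoff-James orthogonal to Y. -/
/-!
If `P` is a projection of norm one with kernel `Y`, then for `z = P x` in its range and `y ∈ Y`,
`‖z‖ = ‖P (z + y)‖ ≤ ‖z + y‖`, so the range is a closed complement Birkhoff–James orthogonal to `Y`.
Conversely, orthogonality of a complement `Z` says exactly that the algebraic projection onto `Z`
along `Y` is contractive; it is then continuous of norm at most one, and at least one because a
nonzero idempotent `p` satisfies `‖p‖ = ‖p * p‖ ≤ ‖p‖²`.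
-/

theorem IsIdempotentElem.one_le_norm {R : Type*} [NormedRing R] {p : R} (hp : IsIdempotentElem p)
    (h0 : p ≠ 0) : 1 ≤ ‖p‖ := by
  have hpos : 0 < ‖p‖ := norm_pos_iff.2 h0
  have : ‖p‖ ≤ ‖p‖ * ‖p‖ := by simpa only [hp.eq] using norm_mul_le p p
  exact (le_mul_iff_one_le_right hpos).1 this

namespace ContinuousLinearMap

variable {𝕜 E : Type*} [NontriviallyNormedField 𝕜] [SeminormedAddCommGroup E] [NormedSpace 𝕜 E]

theorem IsIdempotentElem.norm_le_norm_add_of_mem_ker {P : E →L[𝕜] E} (hP : IsIdempotentElem P)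
    (hP1 : ‖P‖ ≤ 1) {z y : E} (hz : z ∈ P.range) (hy : y ∈ P.ker) : ‖z‖ ≤ ‖z + y‖ := by
  obtain ⟨x, rfl⟩ := hz
  have hPy : P y = 0 := hy
  calc ‖P x‖ = ‖P (P x + y)‖ := by
        rw [map_add, hPy, add_zero, ← mul_apply_eq_comp, hP.eq]
    _ ≤ ‖P‖ * ‖P x + y‖ := P.le_opNorm _
    _ ≤ ‖P x + y‖ := mul_le_of_le_one_left (norm_nonneg _) hP1

end ContinuousLinearMap

namespace Submodule

variable {𝕜 E : Type*} [NontriviallyNormedField 𝕜] [SeminormedAddCommGroup E] [NormedSpace 𝕜 E]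

theorem norm_projection_apply_le {Z Y : Submodule 𝕜 E} (h : IsCompl Z Y)
    (horth : ∀ z ∈ Z, ∀ y ∈ Y, ‖z‖ ≤ ‖z + y‖) (x : E) : ‖Z.projection Y h x‖ ≤ ‖x‖ := by
  have := horth _ (projection_apply_mem h x) _ (projection_apply_mem h.symm x)
  rwa [projection_add_projection_eq_self] at this

theorem exists_isIdempotentElem_norm_le_one_range_ker {Z Y : Submodule 𝕜 E} (h : IsCompl Z Y)
    (horth : ∀ z ∈ Z, ∀ y ∈ Y, ‖z‖ ≤ ‖z + y‖) :
    ∃ P : E →L[𝕜] E, IsIdempotentElem P ∧ ‖P‖ ≤ 1 ∧ P.range = Z ∧ P.ker = Y := by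
  have hbound x : ‖Z.projection Y h x‖ ≤ 1 * ‖x‖ := by
    simpa using norm_projection_apply_le h horth x
  refine ⟨(Z.projection Y h).mkContinuous 1 hbound, ?_,
    LinearMap.mkContinuous_norm_le _ zero_le_one hbound, range_projection h, ker_projection h⟩
  exact ContinuousLinearMap.coe_injective (isIdempotentElem_projection h)

end Submodule

theorem stmt_8_general {X : Type*} [NormedAddCommGroup X] [NormedSpace ℂ X]
    (Y : Submodule ℂ X) (hY : Y ≠ ⊤) :
    (∃ P : X →L[ℂ] X, P.comp P = P ∧ ‖P‖ = 1 ∧ LinearMap.ker (P : X →ₗ[ℂ] X) = Y) ↔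
      (∃ Z : Submodule ℂ X, IsClosed (Z : Set X) ∧ IsCompl Y Z ∧
        ∀ z ∈ Z, ∀ y ∈ Y, ∀ l : ℂ, ‖z‖ ≤ ‖z + l • y‖) := by
  constructor
  · rintro ⟨P, hcomp, hnorm, rfl⟩
    have hidem : IsIdempotentElem P := hcomp
    refine ⟨P.range, ContinuousLinearMap.IsIdempotentElem.isClosed_range hidem,
      (LinearMap.IsIdempotentElem.isCompl
        (ContinuousLinearMap.IsIdempotentElem.toLinearMap hidem)).symm, ?_⟩
    exact fun z hz y hy l ↦ ContinuousLinearMap.IsIdempotentElem.norm_le_norm_add_of_mem_ker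
      hidem hnorm.le hz (Submodule.smul_mem _ l hy)
  · rintro ⟨Z, -, hcompl, horth⟩
    obtain ⟨P, hidem, hnorm, hrange, hker⟩ :=
      Submodule.exists_isIdempotentElem_norm_le_one_range_ker hcompl.symm
        fun z hz y hy ↦ by simpa using horth z hz y hy 1
    have hP0 : P ≠ 0 := by
      rintro rfl
      exact hY (by simpa [← hrange] using hcompl.sup_eq_top)
    exact ⟨P, hidem, le_antisymm hnorm (IsIdempotentElem.one_le_norm hidem hP0), hker⟩

/-- A closed proper subspace `Y` of a Banach space `X` is the kernel of a norm-one projection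
iff there is a closed vector space complement `Z` of `Y` with `Z ⊥_B Y`. -/
theorem stmt_8 {X : Type*} [NormedAddCommGroup X] [NormedSpace ℂ X] [CompleteSpace X]
    (Y : Submodule ℂ X) (hYc : IsClosed (Y : Set X)) (hY : Y ≠ ⊤) :
    (∃ P : X →L[ℂ] X, P.comp P = P ∧ ‖P‖ = 1 ∧ LinearMap.ker (P : X →ₗ[ℂ] X) = Y) ↔
      (∃ Z : Submodule ℂ X, IsClosed (Z : Set X) ∧ IsCompl Y Z ∧
        ∀ z ∈ Z, ∀ y ∈ Y, ∀ l : ℂ, ‖z‖ ≤ ‖z + l • y‖) :=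
  stmt_8_general Y hY
end

section
/- Let X be a reflexive Banach space and f a nonzero element of X*. Then f is a smooth point of X* (i.e., admits a unique norm-one support functional up to the canonical identification) if and only if the norm attainment set M_f = {x ∈ X : ‖x‖ = 1, |f(x)| = ‖f‖} equals {μ·x₀ : |μ| = 1} for some fixed unit vector x₀. -/
/-!
Identify `X` with its bidual. A support functional of `f` is then a vector `x` with `‖x‖ = ‖f‖`
and `f x = ‖f‖²`, and the map `x ↦ (‖f‖² / f x) • x` sends the norm attainment set `M_f` onto
these support vectors. Two points of `M_f` have the same image exactly when they differ by a
unimodular scalar, so the support vector is unique iff `M_f` is a single orbit `{μ • x₀ : |μ| = 1}`.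
-/

open NormedSpace

section SupportVectors

variable {𝕜 X : Type*} [RCLike 𝕜] [NormedAddCommGroup X] [NormedSpace 𝕜 X]
  {f : StrongDual 𝕜 X} {x y : X}

def normAttainmentSet (f : StrongDual 𝕜 X) : Set X :=
  {x | ‖x‖ = 1 ∧ ‖f x‖ = ‖f‖}

def supportVectors (f : StrongDual 𝕜 X) : Set X :=
  {x | ‖x‖ = ‖f‖ ∧ f x = (‖f‖ : 𝕜) ^ 2}

noncomputable def toSupportVector (f : StrongDual 𝕜 X) (x : X) : X :=
  ((‖f‖ : 𝕜) ^ 2 / f x) • x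

theorem smul_mem_normAttainmentSet (hx : x ∈ normAttainmentSet f) {μ : 𝕜} (hμ : ‖μ‖ = 1) :
    μ • x ∈ normAttainmentSet f := by
  simp [normAttainmentSet, norm_smul, hμ, hx.1, hx.2]

theorem apply_ne_zero_of_mem_normAttainmentSet (hf : f ≠ 0) (hx : x ∈ normAttainmentSet f) :
    f x ≠ 0 := by
  rw [← norm_ne_zero_iff, hx.2, norm_ne_zero_iff]
  exact hf

theorem toSupportVector_mem (hf : f ≠ 0) (hx : x ∈ normAttainmentSet f) :
    toSupportVector f x ∈ supportVectors f := by
  have hfx := apply_ne_zero_of_mem_normAttainmentSet hf hx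
  have hnf : ‖f‖ ≠ 0 := norm_ne_zero_iff.2 hf
  constructor
  · rw [toSupportVector, norm_smul, norm_div, norm_pow, RCLike.norm_ofReal, abs_norm, hx.1, hx.2]
    field_simp
  · rw [toSupportVector, map_smul, smul_eq_mul, div_mul_cancel₀ _ hfx]

theorem inv_norm_smul_mem_normAttainmentSet (hf : f ≠ 0) (hx : x ∈ supportVectors f) :
    (‖f‖⁻¹ : 𝕜) • x ∈ normAttainmentSet f := by
  have hnf : ‖f‖ ≠ 0 := norm_ne_zero_iff.2 hf
  constructor
  · rw [norm_smul, norm_inv, RCLike.norm_ofReal, abs_norm, hx.1, inv_mul_cancel₀ hnf]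
  · rw [map_smul, smul_eq_mul, hx.2, norm_mul, norm_inv, norm_pow, RCLike.norm_ofReal, abs_norm]
    field_simp

theorem toSupportVector_inv_norm_smul (hf : f ≠ 0) (hx : x ∈ supportVectors f) :
    toSupportVector f ((‖f‖⁻¹ : 𝕜) • x) = x := by
  have hnf : (‖f‖ : 𝕜) ≠ 0 := RCLike.ofReal_ne_zero.2 (norm_ne_zero_iff.2 hf)
  rw [toSupportVector, map_smul, smul_eq_mul, hx.2, smul_smul]
  convert one_smul 𝕜 x
  field_simp

theorem toSupportVector_eq_iff (hf : f ≠ 0) (hx : x ∈ normAttainmentSet f)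
    (hy : y ∈ normAttainmentSet f) :
    toSupportVector f x = toSupportVector f y ↔ ∃ μ : 𝕜, ‖μ‖ = 1 ∧ x = μ • y := by
  have hfx := apply_ne_zero_of_mem_normAttainmentSet hf hx
  have hfy := apply_ne_zero_of_mem_normAttainmentSet hf hy
  have hnf : (‖f‖ : 𝕜) ≠ 0 := RCLike.ofReal_ne_zero.2 (norm_ne_zero_iff.2 hf)
  constructor
  · intro h
    refine ⟨f x / f y, by rw [norm_div, hx.2, hy.2, div_self (norm_ne_zero_iff.2 hf)], ?_⟩
    calc x = (f x / (‖f‖ : 𝕜) ^ 2) • toSupportVector f x := by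
          rw [toSupportVector, smul_smul, div_mul_div_cancel₀ (pow_ne_zero 2 hnf), div_self hfx,
            one_smul]
      _ = (f x / f y) • y := by
          rw [h, toSupportVector, smul_smul, div_mul_div_cancel₀ (pow_ne_zero 2 hnf)]
  · rintro ⟨μ, hμ, rfl⟩
    have hμ0 : μ ≠ 0 := norm_ne_zero_iff.1 (hμ ▸ one_ne_zero)
    rw [toSupportVector, toSupportVector, map_smul, smul_eq_mul, smul_smul]
    congr 1
    field_simp

theorem existsUnique_mem_supportVectors_iff (hf : f ≠ 0) :
    (∃! x, x ∈ supportVectors f) ↔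
      ∃ x₀ : X, ‖x₀‖ = 1 ∧ normAttainmentSet f = {x | ∃ μ : 𝕜, ‖μ‖ = 1 ∧ x = μ • x₀} := by
  constructor
  · rintro ⟨x, hx, huniq⟩
    have hx₀ := inv_norm_smul_mem_normAttainmentSet hf hx
    refine ⟨_, hx₀.1, Set.ext fun y => ⟨fun hy => ?_, ?_⟩⟩
    · refine (toSupportVector_eq_iff hf hy hx₀).1 ?_
      rw [huniq _ (toSupportVector_mem hf hy), toSupportVector_inv_norm_smul hf hx]
    · rintro ⟨μ, hμ, rfl⟩
      exact smul_mem_normAttainmentSet hx₀ hμ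
  · rintro ⟨x₀, hx₀, hM⟩
    have hx₀M : x₀ ∈ normAttainmentSet f := hM ▸ ⟨1, norm_one, (one_smul _ _).symm⟩
    refine ⟨toSupportVector f x₀, toSupportVector_mem hf hx₀M, fun x hx => ?_⟩
    have hxM := inv_norm_smul_mem_normAttainmentSet hf hx
    calc x = toSupportVector f ((‖f‖⁻¹ : 𝕜) • x) := (toSupportVector_inv_norm_smul hf hx).symm
      _ = toSupportVector f x₀ := (toSupportVector_eq_iff hf hxM hx₀M).2 ((Set.ext_iff.1 hM _).1 hxM)

theorem existsUnique_supportFunctional_iff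
    (hrefl : Function.Surjective (inclusionInDoubleDual 𝕜 X)) :
    (∃! φ : StrongDual 𝕜 (StrongDual 𝕜 X), ‖φ‖ = ‖f‖ ∧ φ f = (‖f‖ : 𝕜) ^ 2) ↔
      ∃! x, x ∈ supportVectors f := by
  have hJ : Function.Bijective (inclusionInDoubleDual 𝕜 X) :=
    ⟨(inclusionInDoubleDualLi 𝕜).injective, hrefl⟩
  have hJnorm (x : X) : ‖inclusionInDoubleDual 𝕜 X x‖ = ‖x‖ :=
    (inclusionInDoubleDualLi 𝕜).norm_map x
  simp only [hJ.existsUnique_iff, hJnorm, dual_def]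
  rfl

end SupportVectors

theorem stmt_10_general {X : Type*} [NormedAddCommGroup X] [NormedSpace ℂ X]
    (hrefl : Function.Surjective (inclusionInDoubleDual ℂ X))
    (f : StrongDual ℂ X) (hf : f ≠ 0) :
    (∃! φ : StrongDual ℂ (StrongDual ℂ X), ‖φ‖ = ‖f‖ ∧ φ f = (‖f‖ : ℂ) ^ 2) ↔
      ∃ x₀ : X, ‖x₀‖ = 1 ∧
        {x : X | ‖x‖ = 1 ∧ ‖f x‖ = ‖f‖} = {x : X | ∃ μ : ℂ, ‖μ‖ = 1 ∧ x = μ • x₀} :=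
  (existsUnique_supportFunctional_iff hrefl).trans (existsUnique_mem_supportVectors_iff hf)

/-- In a reflexive Banach space `X`, a nonzero `f ∈ X*` is a smooth point (it admits exactly
one support functional) iff its norm attainment set is `{μ • x₀ : |μ| = 1}` for some
fixed unit vector `x₀ ∈ X`. -/
theorem stmt_10 {X : Type*} [NormedAddCommGroup X] [NormedSpace ℂ X] [CompleteSpace X]
    (hrefl : Function.Surjective (inclusionInDoubleDual ℂ X))
    (f : StrongDual ℂ X) (hf : f ≠ 0) :
    (∃! φ : StrongDual ℂ (StrongDual ℂ X), ‖φ‖ = ‖f‖ ∧ φ f = (‖f‖ : ℂ) ^ 2) ↔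
      ∃ x₀ : X, ‖x₀‖ = 1 ∧
        {x : X | ‖x‖ = 1 ∧ ‖f x‖ = ‖f‖} = {x : X | ∃ μ : ℂ, ‖μ‖ = 1 ∧ x = μ • x₀} :=
  stmt_10_general hrefl f hf
end

section
/- Let X be a Banach space, T a strict contraction on X such that A_T(x) = (‖x‖² − ‖Tx‖²)^{1/2} is a norm on X. Then for every n ≥ 2, the function A_{T^n}(x) = (‖x‖² − ‖T^n x‖²)^{1/2} also defines a norm on X. -/
/-!
The telescoping identity `‖x‖² - ‖Tⁿx‖² = ∑_{k<n} A_T(Tᵏx)²` exhibits `A_{Tⁿ}(x)` as the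
Euclidean norm of the vector `(A_T(Tᵏx))_{k<n}`. The triangle inequality for `A_{Tⁿ}` then
follows from that of `A_T` (applied coordinatewise) and Minkowski's inequality in `ℝⁿ`, and
definiteness from the `k = 0` coordinate. Contractivity `‖Tx‖ ≤ ‖x‖` is itself forced by
`A_T` being definite, as `Real.sqrt` vanishes on negative numbers.
-/

theorem Real.sqrt_sum_sq_add_le {ι : Type*} [Fintype ι] (f g : ι → ℝ) :
    √(∑ i, (f i + g i) ^ 2) ≤ √(∑ i, f i ^ 2) + √(∑ i, g i ^ 2) := by
  have hnorm : ∀ u : ι → ℝ, ‖WithLp.toLp 2 u‖ = √(∑ i, u i ^ 2) := fun u => by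
    simp only [EuclideanSpace.norm_eq, Real.norm_eq_abs, sq_abs]
  simpa only [← WithLp.toLp_add, hnorm, Pi.add_apply] using
    norm_add_le (WithLp.toLp 2 f) (WithLp.toLp 2 g)

section Defect

variable {X : Type*} [NormedAddCommGroup X]

/-- The paper's `A_S`. -/
noncomputable def defect (S : X → X) (x : X) : ℝ := √(‖x‖ ^ 2 - ‖S x‖ ^ 2)

theorem defect_nonneg (S : X → X) (x : X) : 0 ≤ defect S x := Real.sqrt_nonneg _

theorem defect_sq {S : X → X} {x : X} (h : ‖S x‖ ≤ ‖x‖) :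
    defect S x ^ 2 = ‖x‖ ^ 2 - ‖S x‖ ^ 2 :=
  Real.sq_sqrt (by nlinarith [norm_nonneg (S x)])

variable [NormedSpace ℂ X]

theorem defect_zero (S : X →L[ℂ] X) : defect S 0 = 0 := by simp [defect]

theorem defect_smul (S : X →L[ℂ] X) (c : ℂ) (x : X) : defect S (c • x) = ‖c‖ * defect S x := by
  have hfactor : (‖c‖ * ‖x‖) ^ 2 - (‖c‖ * ‖S x‖) ^ 2 = ‖c‖ ^ 2 * (‖x‖ ^ 2 - ‖S x‖ ^ 2) := by
    ring
  rw [defect, defect, map_smul, norm_smul, norm_smul, hfactor, Real.sqrt_mul (sq_nonneg _),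
    Real.sqrt_sq (norm_nonneg c)]

theorem norm_apply_le_of_isNorm_defect {S : X →L[ℂ] X} (h : IsNorm (defect S)) (x : X) :
    ‖S x‖ ≤ ‖x‖ := by
  by_contra! hlt
  have hx : x ≠ 0 := fun hx => by simp [hx] at hlt
  have hzero : defect S x = 0 :=
    Real.sqrt_eq_zero'.mpr (by nlinarith [norm_nonneg x])
  exact hx ((h.2.1 x).mp hzero)

theorem norm_sq_sub_norm_pow_apply_sq {T : X →L[ℂ] X} (hT : ∀ x, ‖T x‖ ≤ ‖x‖) (n : ℕ) (x : X) :
    ‖x‖ ^ 2 - ‖(T ^ n) x‖ ^ 2 = ∑ k : Fin n, defect T ((T ^ (k : ℕ)) x) ^ 2 := by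
  have hstep : ∀ k : ℕ, defect T ((T ^ k) x) ^ 2 = ‖(T ^ k) x‖ ^ 2 - ‖(T ^ (k + 1)) x‖ ^ 2 :=
    fun k => by rw [defect_sq (hT _), pow_succ' T k, mul_apply_eq_comp]
  rw [Fin.sum_univ_eq_sum_range (fun k => defect T ((T ^ k) x) ^ 2), Finset.sum_congr rfl
    fun k _ => hstep k, Finset.sum_range_sub' (fun k => ‖(T ^ k) x‖ ^ 2), pow_zero,
    one_apply_eq_self]

theorem defect_pow_eq {T : X →L[ℂ] X} (hT : ∀ x, ‖T x‖ ≤ ‖x‖) (n : ℕ) (x : X) :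
    defect ⇑(T ^ n) x = √(∑ k : Fin n, defect T ((T ^ (k : ℕ)) x) ^ 2) := by
  rw [defect, norm_sq_sub_norm_pow_apply_sq hT]

theorem IsNorm.defect_pow {T : X →L[ℂ] X} (h : IsNorm (defect T)) {n : ℕ} (hn : 1 ≤ n) :
    IsNorm (defect ⇑(T ^ n)) := by
  have hT := norm_apply_le_of_isNorm_defect h
  refine ⟨defect_nonneg _, fun x => ⟨fun hx => ?_, fun hx => hx ▸ defect_zero _⟩,
    defect_smul _, fun x y => ?_⟩
  · rw [defect_pow_eq hT, Real.sqrt_eq_zero (by positivity),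
      Finset.sum_eq_zero_iff_of_nonneg fun _ _ => sq_nonneg _] at hx
    have h0 := hx ⟨0, hn⟩ (Finset.mem_univ _)
    rw [sq_eq_zero_iff, Fin.val_mk, pow_zero, one_apply_eq_self] at h0
    exact (h.2.1 x).mp h0
  · rw [defect_pow_eq hT, defect_pow_eq hT, defect_pow_eq hT]
    refine (Real.sqrt_le_sqrt (Finset.sum_le_sum fun k _ => ?_)).trans
      (Real.sqrt_sum_sq_add_le _ _)
    rw [map_add]
    exact pow_le_pow_left₀ (defect_nonneg _ _) (h.2.2.2 _ _) 2

end Defect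

theorem stmt_15_general {X : Type*} [NormedAddCommGroup X] [NormedSpace ℂ X]
    (T : X →L[ℂ] X)
    (hnorm : IsNorm (fun x => Real.sqrt (‖x‖ ^ 2 - ‖T x‖ ^ 2))) :
    ∀ n : ℕ, 2 ≤ n → IsNorm (fun x => Real.sqrt (‖x‖ ^ 2 - ‖(T ^ n) x‖ ^ 2)) :=
  fun _ hn => IsNorm.defect_pow hnorm (by omega)

/-- If `T` is a strict contraction on a Banach space `X` and `A_T` is a norm on `X`,
then `A_{Tⁿ}` is also a norm on `X` for all `n ≥ 2`. -/
theorem stmt_15 {X : Type*} [NormedAddCommGroup X] [NormedSpace ℂ X] [CompleteSpace X]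
    (T : X →L[ℂ] X) (hT : ‖T‖ < 1)
    (hnorm : IsNorm (fun x => Real.sqrt (‖x‖ ^ 2 - ‖T x‖ ^ 2))) :
    ∀ n : ℕ, 2 ≤ n → IsNorm (fun x => Real.sqrt (‖x‖ ^ 2 - ‖(T ^ n) x‖ ^ 2)) :=
  stmt_15_general T hnorm
end

section
/- Let X be a Banach space and T the operator on ℓ¹(ℕ, ℂ) (or any ℓ₁ sequence space) defined by T(x₁, x₂, x₃, x₄, …) = (λ₁(x₁ − x₂), λ₂ x₃, λ₃ x₄, …) where λ_n = (2n−1)/(2n). Then ‖T‖ = 1, and ‖T(x)‖ < ‖x‖ for every nonzero x, yet the function A_T(x) = (‖x‖² − ‖Tx‖²)^{1/2} fails the triangle inequality at the standard basis vectors e₁ and e₂ and hence is not a norm. -/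
/-!
In the paper's indexing, `‖Tx‖ = |x₁ - x₂|/2 + ∑_{n ≥ 2} λₙ |x_{n+1}| ≤ ∑ cₙ |xₙ|` with
`c = (1/2, 1/2, 0, λ₂, λ₃, …)`; every `cₙ < 1`, so this is `< ‖x‖` unless `x = 0`.
Since `T e_{n+1} = λₙ eₙ` for `n ≥ 2` and `λₙ → 1`, `‖T‖ = 1`.
Finally `T(e₁ + e₂) = 0` while `‖T e₁‖ = ‖T e₂‖ = 1/2`, so
`A_T(e₁ + e₂) = 2 > √3 = A_T(e₁) + A_T(e₂)`.
-/

open Filter Topology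

namespace lp

variable {ι : Type*} {E : ι → Type*} [∀ i, NormedAddCommGroup (E i)]

theorem norm_eq_tsum_norm (x : lp E 1) : ‖x‖ = ∑' i, ‖x i‖ := by
  simpa using norm_eq_tsum_rpow (by norm_num) x

theorem summable_norm (x : lp E 1) : Summable fun i => ‖x i‖ := by
  simpa using (lp.memℓp x).summable (p := 1) (by norm_num)

end lp

theorem memℓp_one_of_summable_norm {ι : Type*} {E : ι → Type*} [∀ i, NormedAddCommGroup (E i)]
    {f : ∀ i, E i} (hf : Summable fun i => ‖f i‖) : Memℓp f 1 :=
  (memℓp_gen_iff (by norm_num)).2 (by simpa using hf)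

theorem tsum_mul_lt_tsum_of_lt_one {ι : Type*} {f c : ι → ℝ} (hf : Summable f)
    (hf0 : ∀ i, 0 ≤ f i) (hc0 : ∀ i, 0 ≤ c i) (hc1 : ∀ i, c i < 1) {j : ι} (hj : f j ≠ 0) :
    ∑' i, c i * f i < ∑' i, f i := by
  have hle : ∀ i, c i * f i ≤ f i := fun i => mul_le_of_le_one_left (hf0 i) (hc1 i).le
  refine Summable.tsum_lt_tsum (i := j) hle ?_
    (hf.of_nonneg_of_le (fun i => mul_nonneg (hc0 i) (hf0 i)) hle) hf
  exact mul_lt_of_lt_one_left ((hf0 j).lt_of_ne' hj) (hc1 j)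

noncomputable section

namespace L1Contraction

abbrev L1 : Type := lp (fun _ : ℕ => ℂ) 1

-- `weight n` is the paper's `λ_{n+1}`: coordinates are indexed from `0` here.
def weight (n : ℕ) : ℝ := (2 * n + 1) / (2 * n + 2)

theorem weight_nonneg (n : ℕ) : 0 ≤ weight n := by
  unfold weight; positivity

theorem weight_lt_one (n : ℕ) : weight n < 1 := by
  rw [weight, div_lt_one (by positivity)]
  linarith

theorem tendsto_weight_atTop : Tendsto weight atTop (𝓝 1) := by
  convert tendsto_add_mul_div_add_mul_atTop_nhds (1 : ℝ) 2 2 two_ne_zero using 2 with n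
  · rw [weight]; ring
  · norm_num

theorem norm_weight (n : ℕ) : ‖(weight n : ℂ)‖ = weight n := by
  rw [Complex.norm_real, Real.norm_of_nonneg (weight_nonneg n)]

def seqMap : (ℕ → ℂ) →ₗ[ℂ] (ℕ → ℂ) where
  toFun x
    | 0 => (1 / 2 : ℂ) * (x 0 - x 1)
    | n + 1 => weight (n + 1) * x (n + 3)
  map_add' x y := by
    funext n
    cases n <;> simp only [Pi.add_apply] <;> ring
  map_smul' c x := by
    funext n
    cases n <;> simp only [Pi.smul_apply, smul_eq_mul, RingHom.id_apply] <;> ring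

@[simp] theorem seqMap_zero (x : ℕ → ℂ) : seqMap x 0 = (1 / 2 : ℂ) * (x 0 - x 1) := rfl

@[simp] theorem seqMap_succ (x : ℕ → ℂ) (n : ℕ) :
    seqMap x (n + 1) = weight (n + 1) * x (n + 3) := rfl

theorem norm_seqMap_succ (x : ℕ → ℂ) (n : ℕ) :
    ‖seqMap x (n + 1)‖ = weight (n + 1) * ‖x (n + 3)‖ := by
  rw [seqMap_succ, norm_mul, norm_weight]

theorem summable_weight_mul_norm_tail (x : L1) :
    Summable fun n => weight (n + 1) * ‖x (n + 3)‖ := by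
  refine Summable.of_nonneg_of_le (fun n => by have := weight_nonneg (n + 1); positivity)
    (fun n => mul_le_of_le_one_left (norm_nonneg _) (weight_lt_one _).le) ?_
  exact (summable_nat_add_iff 3).2 (lp.summable_norm x)

theorem memℓp_seqMap (x : L1) : Memℓp (seqMap x) 1 := by
  refine memℓp_one_of_summable_norm ((summable_nat_add_iff 1).1 ?_)
  simpa only [norm_seqMap_succ] using summable_weight_mul_norm_tail x

def Tₗ : L1 →ₗ[ℂ] L1 where
  toFun x := ⟨seqMap x, memℓp_seqMap x⟩
  map_add' x y := lp.ext (by simp only [lp.coeFn_add, map_add])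
  map_smul' c x := lp.ext (by simp only [lp.coeFn_smul, map_smul]; rfl)

theorem Tₗ_apply (x : L1) (n : ℕ) : Tₗ x n = seqMap x n := rfl

theorem norm_eq_add_tsum_tail (x : L1) :
    ‖x‖ = ‖x 0‖ + ‖x 1‖ + ‖x 2‖ + ∑' n, ‖x (n + 3)‖ := by
  rw [lp.norm_eq_tsum_norm, ← (lp.summable_norm x).sum_add_tsum_nat_add 3]
  simp [Finset.sum_range_succ]

theorem norm_Tₗ_apply (x : L1) :
    ‖Tₗ x‖ = ‖x 0 - x 1‖ / 2 + ∑' n, weight (n + 1) * ‖x (n + 3)‖ := by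
  rw [lp.norm_eq_tsum_norm, (lp.summable_norm (Tₗ x)).tsum_eq_zero_add]
  simp only [Tₗ_apply, seqMap_zero, norm_seqMap_succ, norm_mul]
  norm_num
  ring

def inputWeight : ℕ → ℝ
  | 0 | 1 => 1 / 2
  | 2 => 0
  | n + 3 => weight (n + 1)

theorem inputWeight_nonneg (n : ℕ) : 0 ≤ inputWeight n := by
  match n with
  | 0 | 1 | 2 => norm_num [inputWeight]
  | n + 3 => exact weight_nonneg _

theorem inputWeight_lt_one (n : ℕ) : inputWeight n < 1 := by
  match n with
  | 0 | 1 | 2 => norm_num [inputWeight]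
  | n + 3 => exact weight_lt_one _

theorem norm_Tₗ_apply_le (x : L1) : ‖Tₗ x‖ ≤ ∑' n, inputWeight n * ‖x n‖ := by
  have hs : Summable fun n => inputWeight n * ‖x n‖ :=
    (lp.summable_norm x).of_nonneg_of_le
      (fun n => mul_nonneg (inputWeight_nonneg n) (norm_nonneg _))
      fun n => mul_le_of_le_one_left (norm_nonneg _) (inputWeight_lt_one n).le
  rw [norm_Tₗ_apply, ← hs.sum_add_tsum_nat_add 3]
  simp only [Finset.sum_range_succ, Finset.sum_range_zero, inputWeight]
  have := norm_sub_le (x 0) (x 1)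
  linarith

theorem norm_Tₗ_apply_lt (x : L1) (hx : x ≠ 0) : ‖Tₗ x‖ < ‖x‖ := by
  obtain ⟨j, hj⟩ : ∃ j, x j ≠ 0 := by
    by_contra! h
    exact hx (lp.ext (funext h))
  calc ‖Tₗ x‖ ≤ ∑' n, inputWeight n * ‖x n‖ := norm_Tₗ_apply_le x
    _ < ∑' n, ‖x n‖ := tsum_mul_lt_tsum_of_lt_one (lp.summable_norm x) (fun _ => norm_nonneg _)
        inputWeight_nonneg inputWeight_lt_one (norm_ne_zero_iff.2 hj)
    _ = ‖x‖ := (lp.norm_eq_tsum_norm x).symm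

theorem norm_Tₗ_apply_le_norm (x : L1) : ‖Tₗ x‖ ≤ 1 * ‖x‖ := by
  rcases eq_or_ne x 0 with rfl | hx
  · simp
  · simpa using (norm_Tₗ_apply_lt x hx).le

def T : L1 →L[ℂ] L1 := Tₗ.mkContinuous 1 norm_Tₗ_apply_le_norm

theorem T_apply (x : L1) : T x = Tₗ x := rfl

theorem norm_T_apply_single (k : ℕ) : ‖T (lp.single 1 (k + 3) 1)‖ = weight (k + 1) := by
  rw [T_apply, norm_Tₗ_apply, tsum_eq_single k fun n hn => by simp [lp.single_apply, hn]]
  simp [lp.single_apply]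

theorem norm_T : ‖T‖ = 1 := by
  refine le_antisymm (LinearMap.mkContinuous_norm_le _ zero_le_one _) ?_
  refine le_of_tendsto' ((tendsto_add_atTop_iff_nat 1).2 tendsto_weight_atTop) fun k => ?_
  calc weight (k + 1) = ‖T (lp.single 1 (k + 3) 1)‖ := (norm_T_apply_single k).symm
    _ ≤ ‖T‖ * ‖(lp.single 1 (k + 3) 1 : L1)‖ := T.le_opNorm _
    _ = ‖T‖ := by rw [lp.norm_single zero_lt_one, norm_one, mul_one]

theorem norm_of_tail_eq_zero {x : L1} (hx : ∀ n, x (n + 3) = 0) :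
    ‖x‖ = ‖x 0‖ + ‖x 1‖ + ‖x 2‖ := by
  simp [norm_eq_add_tsum_tail, hx]

theorem norm_T_apply_of_tail_eq_zero {x : L1} (hx : ∀ n, x (n + 3) = 0) :
    ‖T x‖ = ‖x 0 - x 1‖ / 2 := by
  simp [T_apply, norm_Tₗ_apply, hx]

theorem not_sqrt_norm_sq_sub_norm_T_sq_add_le (e₁ e₂ : L1)
    (h₁ : ∀ n, e₁ n = if n = 0 then 1 else 0) (h₂ : ∀ n, e₂ n = if n = 1 then 1 else 0) :
    ¬ √(‖e₁ + e₂‖ ^ 2 - ‖T (e₁ + e₂)‖ ^ 2) ≤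
        √(‖e₁‖ ^ 2 - ‖T e₁‖ ^ 2) + √(‖e₂‖ ^ 2 - ‖T e₂‖ ^ 2) := by
  have h₁₂ (n : ℕ) : (e₁ + e₂) n = e₁ n + e₂ n := rfl
  have t₁ : ∀ n, e₁ (n + 3) = 0 := by simp [h₁]
  have t₂ : ∀ n, e₂ (n + 3) = 0 := by simp [h₂]
  have t₁₂ : ∀ n, (e₁ + e₂) (n + 3) = 0 := by simp [h₁₂, t₁, t₂]
  rw [norm_T_apply_of_tail_eq_zero t₁, norm_T_apply_of_tail_eq_zero t₂,
    norm_T_apply_of_tail_eq_zero t₁₂, norm_of_tail_eq_zero t₁, norm_of_tail_eq_zero t₂,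
    norm_of_tail_eq_zero t₁₂]
  simp [h₁₂, h₁, h₂]
  norm_num [Real.sqrt_lt' two_pos]

end L1Contraction

open L1Contraction

/-- The operator `T` on `ℓ¹(ℕ, ℂ)` given by
`T(x₁, x₂, x₃, x₄, …) = (λ₁(x₁ − x₂), λ₂x₃, λ₃x₄, …)` with `λₙ = (2n−1)/(2n)`
(indices here are 0-based, so `(Tx)₀ = (1/2)(x₀ − x₁)` and `(Tx)ₙ = λ_{n+1}·x_{n+2}`
for `n ≥ 1`) satisfies `‖T‖ = 1` and `‖Tx‖ < ‖x‖` for all nonzero `x`, yet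
`A_T(x) = (‖x‖² − ‖Tx‖²)^{1/2}` fails the triangle inequality at the first two standard
basis vectors, hence is not a norm. -/
theorem stmt_18 :
    ∃ T : lp (fun _ : ℕ => ℂ) 1 →L[ℂ] lp (fun _ : ℕ => ℂ) 1,
      (∀ x : lp (fun _ : ℕ => ℂ) 1, (T x) 0 = (1 / 2 : ℂ) * (x 0 - x 1)) ∧
      (∀ (x : lp (fun _ : ℕ => ℂ) 1) (n : ℕ), 1 ≤ n →
        (T x) n = ((2 * (n : ℂ) + 1) / (2 * (n : ℂ) + 2)) * x (n + 2)) ∧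
      ‖T‖ = 1 ∧
      (∀ x : lp (fun _ : ℕ => ℂ) 1, x ≠ 0 → ‖T x‖ < ‖x‖) ∧
      (∀ e₁ e₂ : lp (fun _ : ℕ => ℂ) 1,
        (∀ n : ℕ, e₁ n = if n = 0 then 1 else 0) →
        (∀ n : ℕ, e₂ n = if n = 1 then 1 else 0) →
        ¬ Real.sqrt (‖e₁ + e₂‖ ^ 2 - ‖T (e₁ + e₂)‖ ^ 2) ≤
            Real.sqrt (‖e₁‖ ^ 2 - ‖T e₁‖ ^ 2) + Real.sqrt (‖e₂‖ ^ 2 - ‖T e₂‖ ^ 2)) := by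
  refine ⟨T, fun x => rfl, fun x n hn => ?_, norm_T, norm_Tₗ_apply_lt,
    not_sqrt_norm_sq_sub_norm_T_sq_add_le⟩
  obtain ⟨m, rfl⟩ := Nat.exists_eq_add_of_le' hn
  simp [T_apply, Tₗ_apply, weight]
end
end
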